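/- arXiv:2307.10187 — 4 statements merged into one kernel-verified Lean document; each statement's English description precedes it below -/
import Mathlib

section
/- Let ε ≥ 0 and q ∈ (0,1]. If two probability measures P and Q on a measurable space satisfy P(A) ≤ e^ε Q(A) and Q(A) ≤ e^ε P(A) for all measurable A, then the mixtures P' = (1-q)·Q + q·P and Q satisfy P'(A) ≤ e^{ψ} Q(A) and Q(A) ≤ e^{ψ} P'(A) for all measurable A, where ψ = log(1 + q(e^ε - 1)). -/
/-!
With `c = exp ε`, the mixture gives `A` mass `(1 - q) Q A + q P A`. Bounding `P A` above by
`c Q A` yields the factor `1 - q + q c = 1 + q (c - 1)` at once. Bounding `P A` below by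
`c⁻¹ Q A` yields the factor `(1 - q + q c⁻¹)⁻¹`, which is at most `1 - q + q c` because
`(1 - q + q c) (1 - q + q c⁻¹) - 1 = q (1 - q) (c - 1)² / c ≥ 0`.
-/

open MeasureTheory Real ENNReal

lemma one_le_one_sub_add_mul_mul_one_sub_add_mul_inv {q c : ℝ} (hq0 : 0 ≤ q) (hq1 : q ≤ 1)
    (hc : 0 < c) : 1 ≤ (1 - q + q * c) * (1 - q + q * c⁻¹) := by
  have key : (1 - q + q * c) * (1 - q + q * c⁻¹) - 1 = q * (1 - q) * (c - 1) ^ 2 / c := by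
    field_simp
    ring
  have : 0 ≤ q * (1 - q) * (c - 1) ^ 2 / c :=
    div_nonneg (mul_nonneg (mul_nonneg hq0 (sub_nonneg.2 hq1)) (sq_nonneg _)) hc.le
  linarith

namespace ENNReal

variable {q c : ℝ} {x y : ℝ≥0∞}

lemma ofReal_one_sub_mul_add_mul_ofReal_mul (hq0 : 0 ≤ q) (hq1 : q ≤ 1) (hc : 0 ≤ c) :
    ENNReal.ofReal (1 - q) * x + ENNReal.ofReal q * (ENNReal.ofReal c * x) =
      ENNReal.ofReal (1 - q + q * c) * x := by
  rw [ofReal_add (sub_nonneg.2 hq1) (mul_nonneg hq0 hc), ofReal_mul hq0]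
  ring

lemma ofReal_one_sub_mul_add_mul_le (hq0 : 0 ≤ q) (hq1 : q ≤ 1) (hc : 0 ≤ c)
    (h : y ≤ ENNReal.ofReal c * x) :
    ENNReal.ofReal (1 - q) * x + ENNReal.ofReal q * y ≤ ENNReal.ofReal (1 - q + q * c) * x := by
  rw [← ofReal_one_sub_mul_add_mul_ofReal_mul hq0 hq1 hc]
  gcongr

lemma le_ofReal_one_sub_mul_add_mul (hq0 : 0 ≤ q) (hq1 : q ≤ 1) (hc : 0 ≤ c)
    (h : ENNReal.ofReal c * x ≤ y) :
    ENNReal.ofReal (1 - q + q * c) * x ≤ ENNReal.ofReal (1 - q) * x + ENNReal.ofReal q * y := by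
  rw [← ofReal_one_sub_mul_add_mul_ofReal_mul hq0 hq1 hc]
  gcongr

end ENNReal

namespace MeasureTheory.Measure

variable {Ω : Type*} [MeasurableSpace Ω] {μ ν : Measure Ω} {A : Set Ω} {q c : ℝ}

lemma mixture_apply_le (hq0 : 0 ≤ q) (hq1 : q ≤ 1) (hc : 0 ≤ c)
    (h : ν A ≤ ENNReal.ofReal c * μ A) :
    (ENNReal.ofReal (1 - q) • μ + ENNReal.ofReal q • ν) A ≤
      ENNReal.ofReal (1 - q + q * c) * μ A := by
  simpa only [add_apply, smul_apply, smul_eq_mul] using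
    ENNReal.ofReal_one_sub_mul_add_mul_le hq0 hq1 hc h

lemma le_mixture_apply (hq0 : 0 ≤ q) (hq1 : q ≤ 1) (hc : 0 < c)
    (h : μ A ≤ ENNReal.ofReal c * ν A) :
    μ A ≤ ENNReal.ofReal (1 - q + q * c) *
      (ENNReal.ofReal (1 - q) • μ + ENNReal.ofReal q • ν) A := by
  have hν : ENNReal.ofReal c⁻¹ * μ A ≤ ν A :=
    calc ENNReal.ofReal c⁻¹ * μ A ≤ ENNReal.ofReal c⁻¹ * (ENNReal.ofReal c * ν A) := by
          gcongr
      _ = ν A := by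
        rw [← mul_assoc, ← ofReal_mul (inv_nonneg.2 hc.le), inv_mul_cancel₀ hc.ne',
          ofReal_one, one_mul]
  have hmix := le_ofReal_one_sub_mul_add_mul hq0 hq1 (inv_nonneg.2 hc.le) hν
  calc μ A ≤ ENNReal.ofReal ((1 - q + q * c) * (1 - q + q * c⁻¹)) * μ A :=
        le_mul_of_one_le_left' <| one_le_ofReal.2 <|
          one_le_one_sub_add_mul_mul_one_sub_add_mul_inv hq0 hq1 hc
    _ = ENNReal.ofReal (1 - q + q * c) * (ENNReal.ofReal (1 - q + q * c⁻¹) * μ A) := by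
        rw [ofReal_mul (add_nonneg (sub_nonneg.2 hq1) (mul_nonneg hq0 hc.le)),
          mul_assoc]
    _ ≤ ENNReal.ofReal (1 - q + q * c) *
          (ENNReal.ofReal (1 - q) • μ + ENNReal.ofReal q • ν) A := by
        simpa only [add_apply, smul_apply, smul_eq_mul] using mul_le_mul_right hmix _

end MeasureTheory.Measure

theorem stmt_0_general {Ω : Type*} [MeasurableSpace Ω]
    (P Q : Measure Ω)
    (ε q : ℝ) (hq0 : 0 < q) (hq1 : q ≤ 1)
    (hPQ : ∀ A : Set Ω, MeasurableSet A → P A ≤ ENNReal.ofReal (exp ε) * Q A)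
    (hQP : ∀ A : Set Ω, MeasurableSet A → Q A ≤ ENNReal.ofReal (exp ε) * P A) :
    ∀ A : Set Ω, MeasurableSet A →
      (ENNReal.ofReal (1 - q) • Q + ENNReal.ofReal q • P) A ≤
        ENNReal.ofReal (exp (Real.log (1 + q * (exp ε - 1)))) * Q A ∧
      Q A ≤ ENNReal.ofReal (exp (Real.log (1 + q * (exp ε - 1)))) *
        (ENNReal.ofReal (1 - q) • Q + ENNReal.ofReal q • P) A := by
  intro A hA
  have hfactor : 1 + q * (exp ε - 1) = 1 - q + q * exp ε := by ring
  have hfactor_pos : 0 < 1 - q + q * exp ε :=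
    add_pos_of_nonneg_of_pos (sub_nonneg.2 hq1) (mul_pos hq0 (exp_pos ε))
  rw [hfactor, exp_log hfactor_pos]
  exact ⟨Measure.mixture_apply_le hq0.le hq1 (exp_pos ε).le (hPQ A hA),
    Measure.le_mixture_apply hq0.le hq1 (exp_pos ε) (hQP A hA)⟩

theorem stmt_0 {Ω : Type*} [MeasurableSpace Ω]
    (P Q : Measure Ω) [IsProbabilityMeasure P] [IsProbabilityMeasure Q]
    (ε q : ℝ) (hε : 0 ≤ ε) (hq0 : 0 < q) (hq1 : q ≤ 1)
    (hPQ : ∀ A : Set Ω, MeasurableSet A → P A ≤ ENNReal.ofReal (exp ε) * Q A)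
    (hQP : ∀ A : Set Ω, MeasurableSet A → Q A ≤ ENNReal.ofReal (exp ε) * P A) :
    ∀ A : Set Ω, MeasurableSet A →
      (ENNReal.ofReal (1 - q) • Q + ENNReal.ofReal q • P) A ≤
        ENNReal.ofReal (exp (Real.log (1 + q * (exp ε - 1)))) * Q A ∧
      Q A ≤ ENNReal.ofReal (exp (Real.log (1 + q * (exp ε - 1)))) *
        (ENNReal.ofReal (1 - q) • Q + ENNReal.ofReal q • P) A :=
  stmt_0_general P Q ε q hq0 hq1 hPQ hQP
end

section
/- Let ε : [1,∞) → ℝ≥0 be differentiable with derivative ε', and suppose ε(w) ≤ w·ε'(w) for all w ≥ 1. Then for all w ≥ 1, log(1 + (1/w)(e^{ε(w)} - 1)) ≥ ε(1). -/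
/-!
The function `G w = (exp (f w) - 1) / w` is nondecreasing on `[1, ∞)`: its derivative has the
sign of `w f'(w) exp (f w) - (exp (f w) - 1)`, and `exp t - 1 ≤ t exp t` together with
`f ≤ w f'` makes this nonnegative. Hence `exp (f 1) - 1 = G 1 ≤ G w`, and taking logarithms
gives the claim.
-/

open Real Set

lemma Real.exp_sub_one_le_mul_exp (x : ℝ) : exp x - 1 ≤ x * exp x := by
  have h := mul_le_mul_of_nonneg_right (one_sub_le_exp_neg x) (exp_pos x).le
  rw [← exp_add, neg_add_cancel, exp_zero] at h
  linarith

section ExpSubOneDiv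

variable {f f' : ℝ → ℝ} {a : ℝ}

lemma hasDerivWithinAt_exp_sub_one_div {s : Set ℝ} {x : ℝ}
    (hf : HasDerivWithinAt f (f' x) s x) (hx : x ≠ 0) :
    HasDerivWithinAt (fun y => (exp (f y) - 1) / y)
      ((exp (f x) * f' x * x - (exp (f x) - 1)) / x ^ 2) s x := by
  simpa [Pi.div_def] using (hf.exp.sub_const 1).div (hasDerivWithinAt_id x s) hx

lemma monotoneOn_exp_sub_one_div (ha : 0 < a)
    (hd : ∀ x ≥ a, HasDerivWithinAt f (f' x) (Ici a) x)
    (hgrow : ∀ x ≥ a, f x ≤ x * f' x) :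
    MonotoneOn (fun x => (exp (f x) - 1) / x) (Ici a) := by
  have hG : ∀ x ∈ Ici a, HasDerivWithinAt (fun y => (exp (f y) - 1) / y)
      ((exp (f x) * f' x * x - (exp (f x) - 1)) / x ^ 2) (Ici a) x := fun x hx =>
    hasDerivWithinAt_exp_sub_one_div (hd x hx) (ha.trans_le hx).ne'
  refine monotoneOn_of_hasDerivWithinAt_nonneg (convex_Ici a)
    (f' := fun x => (exp (f x) * f' x * x - (exp (f x) - 1)) / x ^ 2)
    (fun x hx => (hG x hx).continuousWithinAt) (fun x hx => ?_) (fun x hx => ?_)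
  · exact (hG x (interior_subset hx)).mono interior_subset
  · rw [interior_Ici] at hx
    have hnum : exp (f x) - 1 ≤ exp (f x) * f' x * x :=
      calc exp (f x) - 1 ≤ f x * exp (f x) := exp_sub_one_le_mul_exp _
        _ ≤ x * f' x * exp (f x) := by gcongr; exact hgrow x hx.le
        _ = exp (f x) * f' x * x := by ring
    exact div_nonneg (sub_nonneg.mpr hnum) (sq_nonneg x)

end ExpSubOneDiv

theorem stmt_3_general (f f' : ℝ → ℝ)
    (hd : ∀ w ≥ (1 : ℝ), HasDerivWithinAt f (f' w) (Ici 1) w)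
    (hgrow : ∀ w ≥ (1 : ℝ), f w ≤ w * f' w) :
    ∀ w ≥ (1 : ℝ), f 1 ≤ Real.log (1 + (1 / w) * (exp (f w) - 1)) := by
  intro w hw
  have hmono : exp (f 1) - 1 ≤ (exp (f w) - 1) / w := by
    simpa using monotoneOn_exp_sub_one_div one_pos hd hgrow self_mem_Ici hw hw
  have hpos : 0 < 1 + (1 / w) * (exp (f w) - 1) := by
    rw [one_div_mul_eq_div]; linarith [exp_pos (f 1)]
  rw [le_log_iff_exp_le hpos, one_div_mul_eq_div]
  linarith

theorem stmt_3 (f f' : ℝ → ℝ)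
    (hnn : ∀ w ≥ (1 : ℝ), 0 ≤ f w)
    (hd : ∀ w ≥ (1 : ℝ), HasDerivWithinAt f (f' w) (Ici 1) w)
    (hgrow : ∀ w ≥ (1 : ℝ), f w ≤ w * f' w) :
    ∀ w ≥ (1 : ℝ), f 1 ≤ Real.log (1 + (1 / w) * (exp (f w) - 1)) :=
  stmt_3_general f f' hd hgrow
end

section
/- Define θ : [0,r] → ℝ by θ(z) = (exp((a + t z)/(b + s z)) - 1)·(b + s z), with constants a, t ≥ 0 and b, s ≥ 0 with b + s z > 0 on [0,r]. Then θ is convex on [0,r]; in particular θ(z) ≤ max{θ(0), θ(r)} for all z ∈ [0,r]. -/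
/-!
With `u = b + s z` and `v = a + t z` affine in `z`, we have `θ z = u exp (v / u) - u`. The
perspective `(u, v) ↦ u exp (v / u)` of `exp` is, on `u > 0`, the supremum of the linear forms
`(u, v) ↦ exp y ((1 - y) u + v)` (tangent lines of `exp`, attained at `y = v / u`), hence convex;
composing with affine maps and subtracting the affine `u` preserves convexity, and a convex function
on `[0, r]` is bounded by its values at the endpoints.
-/

open Real Set

lemma exp_mul_tangent_le_mul_exp_div {u : ℝ} (v y : ℝ) (hu : 0 < u) :
    exp y * ((1 - y) * u + v) ≤ u * exp (v / u) := by
  calc exp y * ((1 - y) * u + v) = u * (exp y * (v / u - y + 1)) := by field_simp; ring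
    _ ≤ u * (exp y * exp (v / u - y)) := by gcongr; exact add_one_le_exp _
    _ = u * exp (v / u) := by rw [← exp_add, add_sub_cancel]

lemma mul_exp_div_eq_exp_mul_tangent {u : ℝ} (v : ℝ) (hu : 0 < u) :
    u * exp (v / u) = exp (v / u) * ((1 - v / u) * u + v) := by
  field_simp; ring

section Affine

variable {E : Type*} [AddCommGroup E] [Module ℝ E]

lemma AffineMap.concaveOn (f : E →ᵃ[ℝ] ℝ) {S : Set E} (hS : Convex ℝ S) : ConcaveOn ℝ S f :=
  ⟨hS, fun _ _ _ _ _ _ _ _ hab => (Convex.combo_affine_apply hab).ge⟩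

lemma convexOn_mul_exp_div_affineMap (f g : E →ᵃ[ℝ] ℝ) {S : Set E} (hS : Convex ℝ S)
    (hf : ∀ x ∈ S, 0 < f x) : ConvexOn ℝ S fun x => f x * exp (g x / f x) := by
  refine ⟨hS, fun x hx y hy α β hα hβ hαβ => ?_⟩
  set Y := g (α • x + β • y) / f (α • x + β • y)
  calc f (α • x + β • y) * exp (g (α • x + β • y) / f (α • x + β • y))
      = exp Y * ((1 - Y) * f (α • x + β • y) + g (α • x + β • y)) :=
        mul_exp_div_eq_exp_mul_tangent _ (hf _ (hS hx hy hα hβ hαβ))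
    _ = α * (exp Y * ((1 - Y) * f x + g x)) + β * (exp Y * ((1 - Y) * f y + g y)) := by
        simp only [Convex.combo_affine_apply hαβ, smul_eq_mul]
        ring
    _ ≤ α * (f x * exp (g x / f x)) + β * (f y * exp (g y / f y)) := by
        gcongr _ * ?_ + _ * ?_
        · exact exp_mul_tangent_le_mul_exp_div _ _ (hf x hx)
        · exact exp_mul_tangent_le_mul_exp_div _ _ (hf y hy)

end Affine

theorem stmt_14_general (r a t b s : ℝ) (hr : 0 ≤ r)
    (hpos : ∀ z ∈ Icc (0 : ℝ) r, 0 < b + s * z) :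
    let θ : ℝ → ℝ := fun z => (exp ((a + t * z) / (b + s * z)) - 1) * (b + s * z)
    ConvexOn ℝ (Icc 0 r) θ ∧ ∀ z ∈ Icc (0 : ℝ) r, θ z ≤ max (θ 0) (θ r) := by
  intro θ
  let u : ℝ →ᵃ[ℝ] ℝ := AffineMap.const ℝ ℝ b + s • AffineMap.id ℝ ℝ
  let v : ℝ →ᵃ[ℝ] ℝ := AffineMap.const ℝ ℝ a + t • AffineMap.id ℝ ℝ
  have hθ : θ = (fun z => u z * exp (v z / u z)) - u := by
    funext z
    simp only [θ, u, v, AffineMap.coe_add, AffineMap.coe_const, AffineMap.coe_smul,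
      AffineMap.coe_id, Pi.add_apply, Pi.sub_apply, Pi.smul_apply, Function.const_apply, id_eq,
      smul_eq_mul]
    ring
  have hconv : ConvexOn ℝ (Icc 0 r) θ := hθ ▸
    (convexOn_mul_exp_div_affineMap u v (convex_Icc 0 r) (by simpa [u] using hpos)).sub
      (u.concaveOn (convex_Icc 0 r))
  refine ⟨hconv, fun z hz => hconv.le_on_segment ⟨le_rfl, hr⟩ ⟨hr, le_rfl⟩ ?_⟩
  rwa [segment_eq_Icc hr]

theorem stmt_14 (r a t b s : ℝ) (hr : 0 ≤ r) (ha : 0 ≤ a) (ht : 0 ≤ t)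
    (hb : 0 ≤ b) (hs : 0 ≤ s)
    (hpos : ∀ z ∈ Icc (0 : ℝ) r, 0 < b + s * z) :
    let θ : ℝ → ℝ := fun z => (exp ((a + t * z) / (b + s * z)) - 1) * (b + s * z)
    ConvexOn ℝ (Icc 0 r) θ ∧ ∀ z ∈ Icc (0 : ℝ) r, θ z ≤ max (θ 0) (θ r) :=
  stmt_14_general r a t b s hr hpos
end

section
/- Let ε ≥ 0, q ∈ (0,1], and set ψ = log(1 + q(e^ε - 1)). If a nonnegative real number p' satisfies p' ≤ (1 - q)·p₂ + q·e^ε·p₂ for some p₂ ≥ 0, then p' ≤ e^ψ·p₂; moreover, if p' ≥ (1 - q)·p₂ + q·e^{-ε}·p₂ then p' ≥ e^{-ψ}·p₂. -/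
open Real

/-- Convexity of `t ↦ t⁻¹` between the points `1` and `x`. -/
theorem inv_one_sub_add_mul_le {q x : ℝ} (hq0 : 0 ≤ q) (hq1 : q ≤ 1) (hx : 0 < x) :
    (1 - q + q * x)⁻¹ ≤ 1 - q + q * x⁻¹ := by
  have h := (convexOn_zpow (-1)).2 (Set.mem_Ioi.2 one_pos) (Set.mem_Ioi.2 hx)
    (sub_nonneg.2 hq1) hq0 (sub_add_cancel 1 q)
  simpa only [zpow_neg_one, smul_eq_mul, mul_one, inv_one] using h

theorem exp_log_one_add_mul_exp_sub_one {q : ℝ} (ε : ℝ) (hq0 : 0 < q) (hq1 : q ≤ 1) :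
    exp (log (1 + q * (exp ε - 1))) = 1 - q + q * exp ε := by
  have hpos : 0 < 1 - q + q * exp ε := by
    have := mul_pos hq0 (exp_pos ε)
    linarith
  rw [exp_log (by linarith)]
  ring

theorem stmt_18_general (ε q : ℝ) (hq0 : 0 < q) (hq1 : q ≤ 1)
    (p' p₂ : ℝ) (hp₂ : 0 ≤ p₂) :
    let ψ : ℝ := Real.log (1 + q * (exp ε - 1))
    (p' ≤ (1 - q) * p₂ + q * exp ε * p₂ → p' ≤ exp ψ * p₂) ∧
    ((1 - q) * p₂ + q * exp (-ε) * p₂ ≤ p' → exp (-ψ) * p₂ ≤ p') := by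
  intro ψ
  have hexpψ : exp ψ = 1 - q + q * exp ε := exp_log_one_add_mul_exp_sub_one ε hq0 hq1
  refine ⟨fun h => by rw [hexpψ]; linarith, fun h => ?_⟩
  calc exp (-ψ) * p₂ = (1 - q + q * exp ε)⁻¹ * p₂ := by rw [exp_neg, hexpψ]
    _ ≤ (1 - q + q * exp (-ε)) * p₂ := by
      rw [exp_neg ε]
      exact mul_le_mul_of_nonneg_right (inv_one_sub_add_mul_le hq0.le hq1 (exp_pos ε)) hp₂
    _ ≤ p' := by linarith

theorem stmt_18 (ε q : ℝ) (hε : 0 ≤ ε) (hq0 : 0 < q) (hq1 : q ≤ 1)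
    (p' p₂ : ℝ) (hp' : 0 ≤ p') (hp₂ : 0 ≤ p₂) :
    let ψ : ℝ := Real.log (1 + q * (exp ε - 1))
    (p' ≤ (1 - q) * p₂ + q * exp ε * p₂ → p' ≤ exp ψ * p₂) ∧
    ((1 - q) * p₂ + q * exp (-ε) * p₂ ≤ p' → exp (-ψ) * p₂ ≤ p') :=
  stmt_18_general ε q hq0 hq1 p' p₂ hp₂
end
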